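/- The circuits of D(M_1,M_2) are exactly the nonempty subsets C ⊆ [n] that are minimal with the property that rank_{M_1}(C) + rank_{M_2}(C) = |C|. -/
import Mathlib


open Finset

/-- A matroid on the ground set `Fin n`, presented by its rank function. -/
structure FinMatroid (n : ℕ) where
  rank : Finset (Fin n) → ℕ
  rank_empty : rank ∅ = 0
  rank_le_card : ∀ S : Finset (Fin n), rank S ≤ S.card
  rank_mono : ∀ ⦃S T : Finset (Fin n)⦄, S ⊆ T → rank S ≤ rank T
  rank_submod : ∀ S T : Finset (Fin n),
    rank (S ∪ T) + rank (S ∩ T) ≤ rank S + rank T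

namespace FinMatroid

variable {n : ℕ}

/-- A set is independent if its rank equals its cardinality. -/
def Indep (M : FinMatroid n) (I : Finset (Fin n)) : Prop := M.rank I = I.card

/-- The rank of the matroid (rank of the full ground set). -/
def rk (M : FinMatroid n) : ℕ := M.rank Finset.univ

/-- A matroid is loopless if every singleton has positive rank. -/
def Loopless (M : FinMatroid n) : Prop := ∀ i : Fin n, 0 < M.rank {i}

/-- Two matroids on `[n]` have no common loops. -/
def NoCommonLoops (M₁ M₂ : FinMatroid n) : Prop :=
  ∀ i : Fin n, 0 < M₁.rank {i} ∨ 0 < M₂.rank {i}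

/-- A valid family for the Dilworth minimum: pairwise disjoint nonempty
subsets of `S`. -/
def ValidFamily (S : Finset (Fin n)) (𝒯 : Finset (Finset (Fin n))) : Prop :=
  (∀ T ∈ 𝒯, T ⊆ S ∧ T.Nonempty) ∧
    ∀ T ∈ 𝒯, ∀ T' ∈ 𝒯, T ≠ T' → Disjoint T T'

/-- The value `Σ_i (rank_{M₁}(T_i) + rank_{M₂}(T_i) − 1) + |S \ ∪ T_i|`
associated to a family. -/
def famValue (M₁ M₂ : FinMatroid n) (S : Finset (Fin n))
    (𝒯 : Finset (Finset (Fin n))) : ℕ :=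
  (∑ T ∈ 𝒯, (M₁.rank T + M₂.rank T - 1)) + (S \ 𝒯.sup id).card

/-- The rank function of the diagonal Dilworth truncation `D(M₁,M₂)`. -/
noncomputable def rankD (M₁ M₂ : FinMatroid n) (S : Finset (Fin n)) : ℕ :=
  sInf {v : ℕ | ∃ 𝒯 : Finset (Finset (Fin n)),
    ValidFamily S 𝒯 ∧ v = famValue M₁ M₂ S 𝒯}

/-- Independence in the diagonal Dilworth truncation. -/
def IndepD (M₁ M₂ : FinMatroid n) (I : Finset (Fin n)) : Prop :=
  rankD M₁ M₂ I = I.card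

/-- Circuits of the diagonal Dilworth truncation: minimal dependent sets. -/
def CircuitD (M₁ M₂ : FinMatroid n) (C : Finset (Fin n)) : Prop :=
  ¬ IndepD M₁ M₂ C ∧ ∀ C' : Finset (Fin n), C' ⊂ C → IndepD M₁ M₂ C'

end FinMatroid


namespace FinMatroid

variable {n : ℕ}

lemma one_le_sum_rank {M₁ M₂ : FinMatroid n} (h : NoCommonLoops M₁ M₂)
    {T : Finset (Fin n)} (hT : T.Nonempty) : 1 ≤ M₁.rank T + M₂.rank T := by
  obtain ⟨i, hi⟩ := hT
  have h1 : M₁.rank {i} ≤ M₁.rank T := M₁.rank_mono (Finset.singleton_subset_iff.mpr hi)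
  have h2 : M₂.rank {i} ≤ M₂.rank T := M₂.rank_mono (Finset.singleton_subset_iff.mpr hi)
  rcases h i with hh | hh <;> omega

lemma validFamily_empty (S : Finset (Fin n)) : ValidFamily S (∅ : Finset (Finset (Fin n))) :=
  ⟨by simp, by simp⟩

lemma famValue_empty (M₁ M₂ : FinMatroid n) (S : Finset (Fin n)) :
    famValue M₁ M₂ S (∅ : Finset (Finset (Fin n))) = S.card := by
  simp [famValue]

lemma rankD_set_nonempty (M₁ M₂ : FinMatroid n) (S : Finset (Fin n)) :
    {v : ℕ | ∃ 𝒯 : Finset (Finset (Fin n)),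
      ValidFamily S 𝒯 ∧ v = famValue M₁ M₂ S 𝒯}.Nonempty :=
  ⟨famValue M₁ M₂ S ∅, ∅, validFamily_empty S, rfl⟩

lemma rankD_le_famValue (M₁ M₂ : FinMatroid n) {S : Finset (Fin n)}
    {𝒯 : Finset (Finset (Fin n))} (hv : ValidFamily S 𝒯) :
    rankD M₁ M₂ S ≤ famValue M₁ M₂ S 𝒯 :=
  Nat.sInf_le ⟨𝒯, hv, rfl⟩

lemma rankD_le_card (M₁ M₂ : FinMatroid n) (S : Finset (Fin n)) :
    rankD M₁ M₂ S ≤ S.card := by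
  have := rankD_le_famValue M₁ M₂ (validFamily_empty S)
  rwa [famValue_empty] at this

lemma not_indepD_iff {M₁ M₂ : FinMatroid n} (h : NoCommonLoops M₁ M₂) (S : Finset (Fin n)) :
    ¬ IndepD M₁ M₂ S ↔
      ∃ T : Finset (Fin n), T ⊆ S ∧ T.Nonempty ∧ M₁.rank T + M₂.rank T ≤ T.card := by
  constructor
  · intro hni
    have hle := rankD_le_card M₁ M₂ S
    have hlt : rankD M₁ M₂ S < S.card := lt_of_le_of_ne hle hni
    have hmem := Nat.sInf_mem (rankD_set_nonempty M₁ M₂ S)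
    obtain ⟨𝒯, hv, heq⟩ := hmem
    rw [show sInf {v : ℕ | ∃ 𝒯 : Finset (Finset (Fin n)),
      ValidFamily S 𝒯 ∧ v = famValue M₁ M₂ S 𝒯} = rankD M₁ M₂ S from rfl] at heq
    rw [heq] at hlt
    unfold famValue at hlt
    have hUS : 𝒯.sup id ⊆ S := Finset.sup_le fun T hT => (hv.1 T hT).1
    have hcard : (S \ 𝒯.sup id).card = S.card - (𝒯.sup id).card := Finset.card_sdiff_of_subset hUS
    have hUcard : (𝒯.sup id).card = ∑ T ∈ 𝒯, T.card := by
      rw [Finset.sup_eq_biUnion]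
      exact Finset.card_biUnion (fun x hx y hy hne => hv.2 x hx y hy hne)
    have hUle : (𝒯.sup id).card ≤ S.card := Finset.card_le_card hUS
    have hkey : ∑ T ∈ 𝒯, (M₁.rank T + M₂.rank T - 1) < ∑ T ∈ 𝒯, T.card := by omega
    obtain ⟨T, hT, hTlt⟩ := Finset.exists_lt_of_sum_lt hkey
    have hTne : T.Nonempty := (hv.1 T hT).2
    have h1 := one_le_sum_rank h hTne
    exact ⟨T, (hv.1 T hT).1, hTne, by omega⟩
  · rintro ⟨T, hTS, hTne, hTsum⟩
    have hv : ValidFamily S ({T} : Finset (Finset (Fin n))) := by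
      constructor
      · intro T' hT'
        rw [Finset.mem_singleton] at hT'
        subst hT'
        exact ⟨hTS, hTne⟩
      · intro A hA B hB hne
        rw [Finset.mem_singleton] at hA hB
        subst hA; subst hB
        exact absurd rfl hne
    have hval : famValue M₁ M₂ S ({T} : Finset (Finset (Fin n)))
        = (M₁.rank T + M₂.rank T - 1) + (S \ T).card := by
      simp [famValue]
    have hle := rankD_le_famValue M₁ M₂ hv
    rw [hval] at hle
    have hsd : (S \ T).card = S.card - T.card := Finset.card_sdiff_of_subset hTS
    have hTcard : T.card ≤ S.card := Finset.card_le_card hTS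
    have h1 := one_le_sum_rank h hTne
    have hTpos : 0 < T.card := Finset.card_pos.mpr hTne
    intro hind
    unfold IndepD at hind
    omega

lemma exists_tight {M₁ M₂ : FinMatroid n} (h : NoCommonLoops M₁ M₂) :
    ∀ T : Finset (Fin n), T.Nonempty → M₁.rank T + M₂.rank T ≤ T.card →
      ∃ U : Finset (Fin n), U ⊆ T ∧ U.Nonempty ∧ M₁.rank U + M₂.rank U = U.card := by
  intro T
  induction T using Finset.strongInduction with
  | _ T ih =>
    intro hne hle
    rcases eq_or_lt_of_le hle with heq | hlt
    · exact ⟨T, Finset.Subset.refl T, hne, heq⟩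
    · obtain ⟨x, hx⟩ := hne
      set T' := T.erase x with hT'
      have hss : T' ⊂ T := Finset.erase_ssubset hx
      have hcard : T'.card = T.card - 1 := Finset.card_erase_of_mem hx
      have h1 := one_le_sum_rank h ⟨x, hx⟩
      have hTne' : T'.Nonempty := by
        rw [← Finset.card_pos, hcard]; omega
      have hmono : M₁.rank T' + M₂.rank T' ≤ M₁.rank T + M₂.rank T :=
        Nat.add_le_add (M₁.rank_mono (Finset.erase_subset x T))
          (M₂.rank_mono (Finset.erase_subset x T))
      have hle' : M₁.rank T' + M₂.rank T' ≤ T'.card := by omega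
      obtain ⟨U, hU, hUne, hUeq⟩ := ih T' hss hTne' hle'
      exact ⟨U, hU.trans (Finset.erase_subset x T), hUne, hUeq⟩

end FinMatroid

open FinMatroid in
/-- The circuits of `D(M₁,M₂)` are exactly the nonempty sets `C`, minimal with
the property `rank_{M₁}(C) + rank_{M₂}(C) = |C|`. -/
theorem circuitD_iff (n : ℕ) (M₁ M₂ : FinMatroid n)
    (h : NoCommonLoops M₁ M₂) (C : Finset (Fin n)) :
    CircuitD M₁ M₂ C ↔
      (C.Nonempty ∧ M₁.rank C + M₂.rank C = C.card ∧
        ∀ C' : Finset (Fin n), C' ⊂ C → C'.Nonempty →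
          M₁.rank C' + M₂.rank C' ≠ C'.card) := by
  constructor
  · rintro ⟨hdep, hmin⟩
    have hCne : C.Nonempty := by
      rw [Finset.nonempty_iff_ne_empty]
      rintro rfl
      apply hdep
      unfold IndepD
      have := rankD_le_card M₁ M₂ (∅ : Finset (Fin n))
      simpa using this
    obtain ⟨T, hTC, hTne, hTsum⟩ := (not_indepD_iff h C).mp hdep
    have hTeq : T = C := by
      by_contra hne
      have hss : T ⊂ C := lt_of_le_of_ne hTC hne
      exact (not_indepD_iff h T).mpr ⟨T, Finset.Subset.refl T, hTne, hTsum⟩ (hmin T hss)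
    subst hTeq
    have heq : M₁.rank T + M₂.rank T = T.card := by
      rcases eq_or_lt_of_le hTsum with heq | hlt
      · exact heq
      · exfalso
        obtain ⟨x, hx⟩ := hTne
        have hss : T.erase x ⊂ T := Finset.erase_ssubset hx
        have hcard : (T.erase x).card = T.card - 1 := Finset.card_erase_of_mem hx
        have h1 := one_le_sum_rank h ⟨x, hx⟩
        have hne' : (T.erase x).Nonempty := by
          rw [← Finset.card_pos, hcard]; omega
        have hmono : M₁.rank (T.erase x) + M₂.rank (T.erase x)
            ≤ M₁.rank T + M₂.rank T :=
          Nat.add_le_add (M₁.rank_mono (Finset.erase_subset x T))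
            (M₂.rank_mono (Finset.erase_subset x T))
        exact (not_indepD_iff h (T.erase x)).mpr
          ⟨T.erase x, Finset.Subset.refl _, hne', by omega⟩ (hmin _ hss)
    refine ⟨hTne, heq, ?_⟩
    intro C' hss hne' habs
    exact (not_indepD_iff h C').mpr
      ⟨C', Finset.Subset.refl C', hne', le_of_eq habs⟩ (hmin C' hss)
  · rintro ⟨hne, heq, hmin⟩
    constructor
    · exact (not_indepD_iff h C).mpr ⟨C, Finset.Subset.refl C, hne, le_of_eq heq⟩
    · intro C' hss
      by_contra hdep
      obtain ⟨T, hTC', hTne, hTsum⟩ := (not_indepD_iff h C').mp hdep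
      obtain ⟨U, hUT, hUne, hUeq⟩ := exists_tight h T hTne hTsum
      have hUss : U ⊂ C := lt_of_le_of_lt (hUT.trans hTC') hss
      exact hmin U hUss hUne hUeq
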